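/- arXiv:0806.2676 — 4 statements merged into one kernel-verified Lean document; each statement's English description precedes it below -/
import Mathlib

section
/- Let f and g be nonzero rational functions in ℂ(z). Then the product over all points p of the projective line ℙ¹(ℂ) (i.e., over all a ∈ ℂ together with the point ∞) of the tame symbols T_p{f,g} equals 1. (Only finitely many factors differ from 1, namely those at points where f or g has a zero or pole.) -/
/-!
The product of the tame symbols over `ℙ¹(ℂ)` is bimultiplicative in `f` and `g`, since each
tame symbol is, and exchanging `f` and `g` inverts it. As `ℂ` is algebraically closed, the nonzero
rational functions are generated by the constants and the linear polynomials `z - α`, so it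
suffices to check pairs of generators, where at most three points contribute. The point at
infinity is moved to `0` by the substitution `z ↦ 1/z`, a ring endomorphism of `ℂ(z)` that
turns `ord_∞` into `ord_0`.
-/

open Polynomial

/-- The order of vanishing of a nonzero rational function `f ∈ ℂ(z)` at a point `a ∈ ℂ`:
the multiplicity of `a` as a root of the numerator minus its multiplicity as a root of
the denominator. -/
noncomputable def ordAt (f : RatFunc ℂ) (a : ℂ) : ℤ :=
  (Polynomial.rootMultiplicity a f.num : ℤ) - (Polynomial.rootMultiplicity a f.denom : ℤ)

/-- The order of vanishing of a rational function at infinity: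
`deg(denominator) − deg(numerator)`. -/
noncomputable def ordInf (f : RatFunc ℂ) : ℤ :=
  (f.denom.natDegree : ℤ) - (f.num.natDegree : ℤ)

/-- Evaluation of a rational function at a point of `ℂ`. -/
noncomputable def evalAt (f : RatFunc ℂ) (a : ℂ) : ℂ :=
  RatFunc.eval (RingHom.id ℂ) a f

/-- The substitution `z ↦ 1/z` applied to a rational function. -/
noncomputable def invSubst (f : RatFunc ℂ) : RatFunc ℂ :=
  RatFunc.eval (algebraMap ℂ (RatFunc ℂ)) (RatFunc.X)⁻¹ f

/-- The tame symbol `T_a{f,g}` at a finite point `a ∈ ℂ`: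
`(−1)^{ord_a(f)·ord_a(g)} · (f^{ord_a(g)}/g^{ord_a(f)})(a)`. -/
noncomputable def tameSymbol (f g : RatFunc ℂ) (a : ℂ) : ℂ :=
  (-1 : ℂ) ^ (ordAt f a * ordAt g a) * evalAt (f ^ ordAt g a / g ^ ordAt f a) a

/-- The tame symbol `T_∞{f,g}` at the point at infinity, obtained by applying the
substitution `z ↦ 1/z` to `f^{ord_∞(g)}/g^{ord_∞(f)}` and evaluating at `0`. -/
noncomputable def tameSymbolInf (f g : RatFunc ℂ) : ℂ :=
  (-1 : ℂ) ^ (ordInf f * ordInf g) * evalAt (invSubst (f ^ ordInf g / g ^ ordInf f)) 0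

namespace RatFunc

variable {K : Type*} [Field K]

lemma transcendental_X_inv : Transcendental K (X⁻¹ : RatFunc K) :=
  fun h => transcendental_X (IsAlgebraic.inv_iff.mp h)

lemma algebraMap_X_sub_C (α : K) :
    algebraMap K[X] (RatFunc K) (Polynomial.X - Polynomial.C α) = RatFunc.X - RatFunc.C α := by
  rw [map_sub, algebraMap_X, algebraMap_C]

lemma X_sub_C_ne_zero (α : K) : RatFunc.X - RatFunc.C α ≠ 0 := by
  rw [← algebraMap_X_sub_C]
  exact algebraMap_ne_zero (Polynomial.X_sub_C_ne_zero α)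

theorem induction_on_C_X_sub_C [IsAlgClosed K] {P : RatFunc K → Prop}
    (const : ∀ c : K, c ≠ 0 → P (RatFunc.C c))
    (linear : ∀ α : K, P (RatFunc.X - RatFunc.C α))
    (mul : ∀ f g, f ≠ 0 → g ≠ 0 → P f → P g → P (f * g)) (inv : ∀ f, f ≠ 0 → P f → P f⁻¹)
    {f : RatFunc K} (hf : f ≠ 0) : P f := by
  have poly {p : K[X]} (hp : p ≠ 0) : P (algebraMap K[X] (RatFunc K) p) := by
    have hlc : p.leadingCoeff ≠ 0 := leadingCoeff_ne_zero.mpr hp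
    rw [← C_leadingCoeff_mul_prod_multiset_X_sub_C (p := p) IsAlgClosed.card_roots_eq_natDegree,
      map_mul, map_multiset_prod, Multiset.map_map, algebraMap_C]
    obtain ⟨hne, hP⟩ := Multiset.prod_induction (fun g => g ≠ 0 ∧ P g) _
      (fun g h hg hh => ⟨mul_ne_zero hg.1 hh.1, mul g h hg.1 hh.1 hg.2 hh.2⟩)
      ⟨one_ne_zero, by simpa using const 1 one_ne_zero⟩ (by
        rintro _ hg
        obtain ⟨α, -, rfl⟩ := Multiset.mem_map.mp hg
        refine ⟨algebraMap_ne_zero (Polynomial.X_sub_C_ne_zero α), ?_⟩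
        rw [algebraMap_X_sub_C]
        exact linear α)
    exact mul _ _ ((_root_.map_ne_zero _).mpr hlc) hne (const _ hlc) hP
  have hnum := num_ne_zero hf
  have hdenom := algebraMap_ne_zero (denom_ne_zero f)
  rw [← num_div_denom f, div_eq_mul_inv]
  exact mul _ _ (algebraMap_ne_zero hnum) (inv_ne_zero hdenom) (poly hnum)
    (inv _ hdenom (poly (denom_ne_zero f)))

end RatFunc

lemma ordAt_eq_of_eq_div {f : RatFunc ℂ} {p q : ℂ[X]} (hp : p ≠ 0) (hq : q ≠ 0)
    (h : f = algebraMap ℂ[X] (RatFunc ℂ) p / algebraMap ℂ[X] (RatFunc ℂ) q) (a : ℂ) :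
    ordAt f a = rootMultiplicity a p - rootMultiplicity a q := by
  have hf : f.num ≠ 0 := RatFunc.num_ne_zero <| h ▸
    div_ne_zero (RatFunc.algebraMap_ne_zero hp) (RatFunc.algebraMap_ne_zero hq)
  have key := congrArg (rootMultiplicity a) ((RatFunc.num_mul_eq_mul_denom_iff hq).mpr h)
  rw [rootMultiplicity_mul (mul_ne_zero hf hq),
    rootMultiplicity_mul (mul_ne_zero hp (RatFunc.denom_ne_zero f))] at key
  unfold ordAt
  omega

lemma ordAt_algebraMap (p : ℂ[X]) (a : ℂ) :
    ordAt (algebraMap ℂ[X] (RatFunc ℂ) p) a = rootMultiplicity a p := by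
  simp [ordAt, RatFunc.num_algebraMap, RatFunc.denom_algebraMap]

lemma ordAt_C (c a : ℂ) : ordAt (RatFunc.C c) a = 0 := by
  rw [← RatFunc.algebraMap_C, ordAt_algebraMap, rootMultiplicity_C, Nat.cast_zero]

lemma ordAt_X_sub_C (α a : ℂ) :
    ordAt (RatFunc.X - RatFunc.C α) a = if a = α then 1 else 0 := by
  rw [← RatFunc.algebraMap_X_sub_C, ordAt_algebraMap, rootMultiplicity_X_sub_C]
  split_ifs <;> rfl

lemma ordAt_one (a : ℂ) : ordAt 1 a = 0 := by
  simp [ordAt]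

lemma ordAt_mul {f g : RatFunc ℂ} (hf : f ≠ 0) (hg : g ≠ 0) (a : ℂ) :
    ordAt (f * g) a = ordAt f a + ordAt g a := by
  have hnum := mul_ne_zero (RatFunc.num_ne_zero hf) (RatFunc.num_ne_zero hg)
  have hdenom := mul_ne_zero (RatFunc.denom_ne_zero f) (RatFunc.denom_ne_zero g)
  have h : f * g = algebraMap ℂ[X] (RatFunc ℂ) (f.num * g.num)
      / algebraMap ℂ[X] (RatFunc ℂ) (f.denom * g.denom) := by
    rw [map_mul, map_mul, ← div_mul_div_comm, RatFunc.num_div_denom, RatFunc.num_div_denom]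
  rw [ordAt_eq_of_eq_div hnum hdenom h, rootMultiplicity_mul hnum, rootMultiplicity_mul hdenom]
  unfold ordAt
  push_cast
  ring

lemma ordAt_inv {f : RatFunc ℂ} (hf : f ≠ 0) (a : ℂ) : ordAt f⁻¹ a = -ordAt f a := by
  have h := ordAt_mul (inv_ne_zero hf) hf a
  rw [inv_mul_cancel₀ hf, ordAt_one] at h
  omega

lemma ordAt_div {f g : RatFunc ℂ} (hf : f ≠ 0) (hg : g ≠ 0) (a : ℂ) :
    ordAt (f / g) a = ordAt f a - ordAt g a := by
  rw [div_eq_mul_inv, ordAt_mul hf (inv_ne_zero hg), ordAt_inv hg, sub_eq_add_neg]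

lemma ordAt_zpow {f : RatFunc ℂ} (hf : f ≠ 0) (n : ℤ) (a : ℂ) :
    ordAt (f ^ n) a = n * ordAt f a := by
  induction n using Int.induction_on with
  | zero => rw [zpow_zero, ordAt_one, zero_mul]
  | succ k ih => rw [zpow_add_one₀ hf, ordAt_mul (zpow_ne_zero _ hf) hf, ih]; ring
  | pred k ih =>
    rw [zpow_sub_one₀ hf, ordAt_mul (zpow_ne_zero _ hf) (inv_ne_zero hf), ih, ordAt_inv hf]; ring

lemma ordAt_zpow_div_zpow {f g : RatFunc ℂ} (hf : f ≠ 0) (hg : g ≠ 0) (a : ℂ) :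
    ordAt (f ^ ordAt g a / g ^ ordAt f a) a = 0 := by
  rw [ordAt_div (zpow_ne_zero _ hf) (zpow_ne_zero _ hg), ordAt_zpow hf, ordAt_zpow hg]
  ring

lemma finite_setOf_ordAt_ne_zero {f : RatFunc ℂ} (hf : f ≠ 0) :
    {a | ordAt f a ≠ 0}.Finite := by
  refine ((f.num * f.denom).roots.toFinset.finite_toSet).subset fun a ha => ?_
  have hprod := mul_ne_zero (RatFunc.num_ne_zero hf) (RatFunc.denom_ne_zero f)
  have hpos : 0 < rootMultiplicity a (f.num * f.denom) := by
    rw [rootMultiplicity_mul hprod]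
    simp only [Set.mem_ofPred_eq, ordAt] at ha
    omega
  simpa [hprod] using (rootMultiplicity_pos hprod).mp hpos

lemma ordInf_C (c : ℂ) : ordInf (RatFunc.C c) = 0 := by
  simp [ordInf, RatFunc.num_C, RatFunc.denom_C]

lemma ordInf_X_sub_C (α : ℂ) : ordInf (RatFunc.X - RatFunc.C α) = -1 := by
  rw [← RatFunc.algebraMap_X_sub_C, ordInf, RatFunc.num_algebraMap, RatFunc.denom_algebraMap,
    natDegree_X_sub_C, natDegree_one]
  rfl

lemma not_isRoot_of_ordAt_eq_zero {f : RatFunc ℂ} (hf : f ≠ 0) {a : ℂ} (h : ordAt f a = 0) :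
    ¬f.num.IsRoot a ∧ ¬f.denom.IsRoot a := by
  have hnum := RatFunc.num_ne_zero hf
  have hdenom := RatFunc.denom_ne_zero f
  have not_both : ¬(f.num.IsRoot a ∧ f.denom.IsRoot a) := fun ⟨hn, hd⟩ =>
    not_isUnit_X_sub_C a <| (RatFunc.isCoprime_num_denom f).isUnit_of_dvd'
      (dvd_iff_isRoot.mpr hn) (dvd_iff_isRoot.mpr hd)
  rw [← rootMultiplicity_pos hnum, ← rootMultiplicity_pos hdenom] at not_both ⊢
  unfold ordAt at h
  omega

lemma evalAt_one (a : ℂ) : evalAt 1 a = 1 := RatFunc.eval_one _ _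

lemma evalAt_C (c a : ℂ) : evalAt (RatFunc.C c) a = c := RatFunc.eval_C _ _

lemma evalAt_algebraMap (p : ℂ[X]) (a : ℂ) :
    evalAt (algebraMap ℂ[X] (RatFunc ℂ) p) a = p.eval a := by
  simp [evalAt]

lemma evalAt_X_sub_C (α a : ℂ) : evalAt (RatFunc.X - RatFunc.C α) a = a - α := by
  rw [← RatFunc.algebraMap_X_sub_C, evalAt_algebraMap, eval_sub, eval_X, eval_C]

lemma evalAt_ne_zero_of_ordAt_eq_zero {f : RatFunc ℂ} (hf : f ≠ 0) {a : ℂ}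
    (h : ordAt f a = 0) : evalAt f a ≠ 0 :=
  div_ne_zero (not_isRoot_of_ordAt_eq_zero hf h).1 (not_isRoot_of_ordAt_eq_zero hf h).2

lemma evalAt_mul_of_ordAt_eq_zero {f g : RatFunc ℂ} (hf : f ≠ 0) (hg : g ≠ 0) {a : ℂ}
    (hfa : ordAt f a = 0) (hga : ordAt g a = 0) :
    evalAt (f * g) a = evalAt f a * evalAt g a :=
  RatFunc.eval_mul _ _ (not_isRoot_of_ordAt_eq_zero hf hfa).2
    (not_isRoot_of_ordAt_eq_zero hg hga).2

lemma evalAt_inv_of_ordAt_eq_zero {f : RatFunc ℂ} (hf : f ≠ 0) {a : ℂ} (h : ordAt f a = 0) :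
    evalAt f⁻¹ a = (evalAt f a)⁻¹ := by
  have hinv : ordAt f⁻¹ a = 0 := by rw [ordAt_inv hf, h, neg_zero]
  refine eq_inv_of_mul_eq_one_right ?_
  rw [← evalAt_mul_of_ordAt_eq_zero hf (inv_ne_zero hf) h hinv, mul_inv_cancel₀ hf, evalAt_one]

lemma evalAt_div_of_ordAt_eq_zero {f g : RatFunc ℂ} (hf : f ≠ 0) (hg : g ≠ 0) {a : ℂ}
    (hfa : ordAt f a = 0) (hga : ordAt g a = 0) :
    evalAt (f / g) a = evalAt f a / evalAt g a := by
  rw [div_eq_mul_inv, evalAt_mul_of_ordAt_eq_zero hf (inv_ne_zero hg) hfa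
    (by rw [ordAt_inv hg, hga, neg_zero]), evalAt_inv_of_ordAt_eq_zero hg hga, div_eq_mul_inv]

lemma evalAt_zpow_of_ordAt_eq_zero {f : RatFunc ℂ} (hf : f ≠ 0) {a : ℂ} (h : ordAt f a = 0)
    (n : ℤ) : evalAt (f ^ n) a = evalAt f a ^ n := by
  have hpow (k : ℤ) : ordAt (f ^ k) a = 0 := by rw [ordAt_zpow hf, h, mul_zero]
  induction n using Int.induction_on with
  | zero => rw [zpow_zero, zpow_zero, evalAt_one]
  | succ k ih =>
    rw [zpow_add_one₀ hf, evalAt_mul_of_ordAt_eq_zero (zpow_ne_zero _ hf) hf (hpow _) h, ih,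
      zpow_add_one₀ (evalAt_ne_zero_of_ordAt_eq_zero hf h)]
  | pred k ih =>
    rw [zpow_sub_one₀ hf, evalAt_mul_of_ordAt_eq_zero (zpow_ne_zero _ hf) (inv_ne_zero hf)
      (hpow _) (by rw [ordAt_inv hf, h, neg_zero]), ih, evalAt_inv_of_ordAt_eq_zero hf h,
      zpow_sub_one₀ (evalAt_ne_zero_of_ordAt_eq_zero hf h)]

noncomputable def invSubstHom : RatFunc ℂ →ₐ[ℂ] RatFunc ℂ :=
  RatFunc.liftAlgHom (aeval RatFunc.X⁻¹) <|
    nonZeroDivisors_le_comap_nonZeroDivisors_of_injective _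
      (transcendental_iff_injective.mp RatFunc.transcendental_X_inv)

lemma coe_invSubstHom : ⇑invSubstHom = invSubst :=
  funext fun f => RatFunc.liftAlgHom_apply _ _ f

lemma invSubst_ne_zero {f : RatFunc ℂ} (hf : f ≠ 0) : invSubst f ≠ 0 := by
  rw [← coe_invSubstHom]
  exact (_root_.map_ne_zero _).mpr hf

lemma invSubst_mul (f g : RatFunc ℂ) : invSubst (f * g) = invSubst f * invSubst g := by
  rw [← coe_invSubstHom, map_mul]

lemma invSubst_inv (f : RatFunc ℂ) : invSubst f⁻¹ = (invSubst f)⁻¹ := by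
  rw [← coe_invSubstHom, map_inv₀]

lemma invSubst_C (c : ℂ) : invSubst (RatFunc.C c) = RatFunc.C c := by
  rw [← coe_invSubstHom, ← RatFunc.algebraMap_eq_C, AlgHom.commutes]

lemma invSubst_X_sub_C (α : ℂ) :
    invSubst (RatFunc.X - RatFunc.C α) = RatFunc.X⁻¹ - RatFunc.C α := by
  rw [← coe_invSubstHom, map_sub, coe_invSubstHom, invSubst_C, invSubst, RatFunc.eval,
    RatFunc.num_X, RatFunc.denom_X, eval₂_X, eval₂_one, div_one]

lemma invSubst_algebraMap (p : ℂ[X]) :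
    invSubst (algebraMap ℂ[X] (RatFunc ℂ) p) = algebraMap ℂ[X] (RatFunc ℂ) p.reverse
      * (algebraMap ℂ[X] (RatFunc ℂ) (X ^ p.natDegree))⁻¹ := by
  let _ : Invertible (RatFunc.X⁻¹ : RatFunc ℂ) :=
    invertibleOfNonzero (inv_ne_zero RatFunc.X_ne_zero)
  have h := eval₂_reverse_mul_pow (algebraMap ℂ (RatFunc ℂ)) (RatFunc.X⁻¹ : RatFunc ℂ) p
  rw [invOf_eq_inv, inv_inv, ← aeval_def, RatFunc.aeval_X_left_eq_algebraMap] at h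
  rw [invSubst, RatFunc.eval, RatFunc.num_algebraMap, RatFunc.denom_algebraMap, eval₂_one,
    div_one, ← h, map_pow, RatFunc.algebraMap_X, inv_pow]

lemma ordAt_invSubst_algebraMap {p : ℂ[X]} (hp : p ≠ 0) :
    ordAt (invSubst (algebraMap ℂ[X] (RatFunc ℂ) p)) 0 = -p.natDegree := by
  have hrev : rootMultiplicity 0 p.reverse = 0 := rootMultiplicity_eq_zero <| by
    rw [IsRoot, ← coeff_zero_eq_eval_zero, coeff_zero_reverse]
    exact leadingCoeff_ne_zero.mpr hp
  have hXpow := RatFunc.algebraMap_ne_zero (pow_ne_zero p.natDegree (X_ne_zero (R := ℂ)))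
  rw [invSubst_algebraMap, ordAt_mul (RatFunc.algebraMap_ne_zero (mt reverse_eq_zero.mp hp))
    (inv_ne_zero hXpow), ordAt_inv hXpow, ordAt_algebraMap, ordAt_algebraMap, hrev]
  simpa using rootMultiplicity_X_sub_C_pow (0 : ℂ) p.natDegree

lemma ordAt_invSubst_zero {f : RatFunc ℂ} (hf : f ≠ 0) : ordAt (invSubst f) 0 = ordInf f := by
  have hnum := RatFunc.num_ne_zero hf
  have hdenom := RatFunc.denom_ne_zero f
  conv_lhs => rw [← RatFunc.num_div_denom f, ← coe_invSubstHom, map_div₀, coe_invSubstHom]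
  rw [ordAt_div (invSubst_ne_zero (RatFunc.algebraMap_ne_zero hnum))
    (invSubst_ne_zero (RatFunc.algebraMap_ne_zero hdenom)), ordAt_invSubst_algebraMap hnum,
    ordAt_invSubst_algebraMap hdenom, ordInf]
  ring

lemma tameSymbol_eq_one_of_ordAt_eq_zero {f g : RatFunc ℂ} {a : ℂ} (hf : ordAt f a = 0)
    (hg : ordAt g a = 0) : tameSymbol f g a = 1 := by
  rw [tameSymbol, hf, hg, zpow_zero, zpow_zero, div_one, evalAt_one, mul_zero, zpow_zero, one_mul]

lemma tameSymbol_one_left (g : RatFunc ℂ) (a : ℂ) : tameSymbol 1 g a = 1 := by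
  rw [tameSymbol, ordAt_one, one_zpow, zpow_zero, div_one, evalAt_one, zero_mul, zpow_zero,
    one_mul]

lemma tameSymbol_mul_left {f₁ f₂ g : RatFunc ℂ} (hf₁ : f₁ ≠ 0) (hf₂ : f₂ ≠ 0) (hg : g ≠ 0)
    (a : ℂ) : tameSymbol (f₁ * f₂) g a = tameSymbol f₁ g a * tameSymbol f₂ g a := by
  have hsplit : (f₁ * f₂) ^ ordAt g a / g ^ (ordAt f₁ a + ordAt f₂ a)
      = (f₁ ^ ordAt g a / g ^ ordAt f₁ a) * (f₂ ^ ordAt g a / g ^ ordAt f₂ a) := by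
    rw [mul_zpow, zpow_add₀ hg, div_mul_div_comm]
  rw [tameSymbol, ordAt_mul hf₁ hf₂, hsplit, evalAt_mul_of_ordAt_eq_zero
    (div_ne_zero (zpow_ne_zero _ hf₁) (zpow_ne_zero _ hg))
    (div_ne_zero (zpow_ne_zero _ hf₂) (zpow_ne_zero _ hg))
    (ordAt_zpow_div_zpow hf₁ hg a) (ordAt_zpow_div_zpow hf₂ hg a),
    add_mul, zpow_add₀ (neg_ne_zero.mpr one_ne_zero), tameSymbol, tameSymbol]
  ring

lemma tameSymbol_inv_left {f g : RatFunc ℂ} (hf : f ≠ 0) (hg : g ≠ 0) (a : ℂ) :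
    tameSymbol f⁻¹ g a = (tameSymbol f g a)⁻¹ := by
  have h := tameSymbol_mul_left (inv_ne_zero hf) hf hg a
  rw [inv_mul_cancel₀ hf, tameSymbol_one_left] at h
  exact eq_inv_of_mul_eq_one_left h.symm

lemma tameSymbol_swap {f g : RatFunc ℂ} (hf : f ≠ 0) (hg : g ≠ 0) (a : ℂ) :
    tameSymbol g f a = (tameSymbol f g a)⁻¹ := by
  rw [tameSymbol, tameSymbol, ← inv_div, evalAt_inv_of_ordAt_eq_zero
    (div_ne_zero (zpow_ne_zero _ hf) (zpow_ne_zero _ hg)) (ordAt_zpow_div_zpow hf hg a),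
    mul_inv, ← inv_zpow, inv_neg_one, mul_comm (ordAt g a)]

lemma tameSymbol_of_ordAt_left_eq_zero {f : RatFunc ℂ} (hf : f ≠ 0) (g : RatFunc ℂ) {a : ℂ}
    (h : ordAt f a = 0) : tameSymbol f g a = evalAt f a ^ ordAt g a := by
  rw [tameSymbol, h, zero_mul, zpow_zero, zpow_zero, div_one, one_mul,
    evalAt_zpow_of_ordAt_eq_zero hf h]

lemma tameSymbol_self {f : RatFunc ℂ} (hf : f ≠ 0) (a : ℂ) :
    tameSymbol f f a = (-1) ^ (ordAt f a * ordAt f a) := by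
  rw [tameSymbol, div_self (zpow_ne_zero _ hf), evalAt_one, mul_one]

lemma hasFiniteMulSupport_tameSymbol {f g : RatFunc ℂ} (hf : f ≠ 0) (hg : g ≠ 0) :
    Function.HasFiniteMulSupport (tameSymbol f g) :=
  ((finite_setOf_ordAt_ne_zero hf).union (finite_setOf_ordAt_ne_zero hg)).subset fun a ha => by
    by_contra hout
    simp only [Set.mem_union, Set.mem_ofPred_eq, not_or, not_not] at hout
    exact ha (tameSymbol_eq_one_of_ordAt_eq_zero hout.1 hout.2)

lemma tameSymbolInf_eq_tameSymbol_invSubst {f g : RatFunc ℂ} (hf : f ≠ 0) (hg : g ≠ 0) :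
    tameSymbolInf f g = tameSymbol (invSubst f) (invSubst g) 0 := by
  rw [tameSymbolInf, tameSymbol, ordAt_invSubst_zero hf, ordAt_invSubst_zero hg,
    ← coe_invSubstHom, map_div₀, map_zpow₀, map_zpow₀]

lemma tameSymbolInf_mul_left {f₁ f₂ g : RatFunc ℂ} (hf₁ : f₁ ≠ 0) (hf₂ : f₂ ≠ 0) (hg : g ≠ 0) :
    tameSymbolInf (f₁ * f₂) g = tameSymbolInf f₁ g * tameSymbolInf f₂ g := by
  rw [tameSymbolInf_eq_tameSymbol_invSubst (mul_ne_zero hf₁ hf₂) hg,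
    tameSymbolInf_eq_tameSymbol_invSubst hf₁ hg, tameSymbolInf_eq_tameSymbol_invSubst hf₂ hg,
    invSubst_mul, tameSymbol_mul_left (invSubst_ne_zero hf₁) (invSubst_ne_zero hf₂)
      (invSubst_ne_zero hg)]

lemma tameSymbolInf_inv_left {f g : RatFunc ℂ} (hf : f ≠ 0) (hg : g ≠ 0) :
    tameSymbolInf f⁻¹ g = (tameSymbolInf f g)⁻¹ := by
  rw [tameSymbolInf_eq_tameSymbol_invSubst (inv_ne_zero hf) hg,
    tameSymbolInf_eq_tameSymbol_invSubst hf hg, invSubst_inv,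
    tameSymbol_inv_left (invSubst_ne_zero hf) (invSubst_ne_zero hg)]

lemma tameSymbolInf_swap {f g : RatFunc ℂ} (hf : f ≠ 0) (hg : g ≠ 0) :
    tameSymbolInf g f = (tameSymbolInf f g)⁻¹ := by
  rw [tameSymbolInf_eq_tameSymbol_invSubst hg hf, tameSymbolInf_eq_tameSymbol_invSubst hf hg,
    tameSymbol_swap (invSubst_ne_zero hf) (invSubst_ne_zero hg)]

lemma tameSymbolInf_self {f : RatFunc ℂ} (hf : f ≠ 0) :
    tameSymbolInf f f = (-1) ^ (ordInf f * ordInf f) := by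
  rw [tameSymbolInf_eq_tameSymbol_invSubst hf hf, tameSymbol_self (invSubst_ne_zero hf),
    ordAt_invSubst_zero hf]

noncomputable def tameSymbolProd (f g : RatFunc ℂ) : ℂ :=
  (∏ᶠ a, tameSymbol f g a) * tameSymbolInf f g

lemma tameSymbolProd_mul_left {f₁ f₂ g : RatFunc ℂ} (hf₁ : f₁ ≠ 0) (hf₂ : f₂ ≠ 0) (hg : g ≠ 0) :
    tameSymbolProd (f₁ * f₂) g = tameSymbolProd f₁ g * tameSymbolProd f₂ g := by
  simp only [tameSymbolProd, tameSymbol_mul_left hf₁ hf₂ hg, tameSymbolInf_mul_left hf₁ hf₂ hg,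
    finprod_mul_distrib (hasFiniteMulSupport_tameSymbol hf₁ hg)
      (hasFiniteMulSupport_tameSymbol hf₂ hg)]
  ring

lemma tameSymbolProd_inv_left {f g : RatFunc ℂ} (hf : f ≠ 0) (hg : g ≠ 0) :
    tameSymbolProd f⁻¹ g = (tameSymbolProd f g)⁻¹ := by
  simp only [tameSymbolProd, tameSymbol_inv_left hf hg, tameSymbolInf_inv_left hf hg,
    finprod_inv_distrib, mul_inv]

lemma tameSymbolProd_swap {f g : RatFunc ℂ} (hf : f ≠ 0) (hg : g ≠ 0) :
    tameSymbolProd g f = (tameSymbolProd f g)⁻¹ := by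
  simp only [tameSymbolProd, tameSymbol_swap hf hg, tameSymbolInf_swap hf hg,
    finprod_inv_distrib, mul_inv]

lemma tameSymbolProd_C_left {c : ℂ} (hc : c ≠ 0) {g : RatFunc ℂ} (hg : g ≠ 0) :
    tameSymbolProd (RatFunc.C c) g = (∏ᶠ a, c ^ ordAt g a) * c ^ ordInf g := by
  have hC : RatFunc.C c ≠ 0 := (_root_.map_ne_zero _).mpr hc
  rw [tameSymbolProd, tameSymbolInf_eq_tameSymbol_invSubst hC hg, invSubst_C,
    tameSymbol_of_ordAt_left_eq_zero hC _ (ordAt_C c 0), evalAt_C, ordAt_invSubst_zero hg]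
  congr 1
  exact finprod_congr fun a => by rw [tameSymbol_of_ordAt_left_eq_zero hC _ (ordAt_C c a), evalAt_C]

lemma tameSymbolProd_C_C {c d : ℂ} (hc : c ≠ 0) (hd : d ≠ 0) :
    tameSymbolProd (RatFunc.C c) (RatFunc.C d) = 1 := by
  simp [tameSymbolProd_C_left hc ((_root_.map_ne_zero _).mpr hd), ordAt_C, ordInf_C]

lemma tameSymbolProd_C_X_sub_C {c : ℂ} (hc : c ≠ 0) (β : ℂ) :
    tameSymbolProd (RatFunc.C c) (RatFunc.X - RatFunc.C β) = 1 := by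
  rw [tameSymbolProd_C_left hc (RatFunc.X_sub_C_ne_zero β),
    finprod_eq_single _ β fun a ha => by rw [ordAt_X_sub_C, if_neg ha, zpow_zero],
    ordAt_X_sub_C, if_pos rfl, ordInf_X_sub_C, zpow_one, zpow_neg_one, mul_inv_cancel₀ hc]

lemma tameSymbolProd_X_sub_C_self (α : ℂ) :
    tameSymbolProd (RatFunc.X - RatFunc.C α) (RatFunc.X - RatFunc.C α) = 1 := by
  have hf := RatFunc.X_sub_C_ne_zero α
  rw [tameSymbolProd, tameSymbolInf_self hf, ordInf_X_sub_C,
    finprod_eq_single _ α fun a ha => by rw [tameSymbol_self hf, ordAt_X_sub_C, if_neg ha]; rfl,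
    tameSymbol_self hf, ordAt_X_sub_C, if_pos rfl]
  norm_num

lemma tameSymbolInf_X_sub_C_X_sub_C (α β : ℂ) :
    tameSymbolInf (RatFunc.X - RatFunc.C α) (RatFunc.X - RatFunc.C β) = -1 := by
  have hne (γ : ℂ) : (1 - C γ * X : ℂ[X]).eval 0 ≠ 0 := by simp
  have hpoly (γ : ℂ) : algebraMap ℂ[X] (RatFunc ℂ) (1 - C γ * X) ≠ 0 :=
    RatFunc.algebraMap_ne_zero fun h => hne γ (by rw [h, eval_zero])
  have hord (γ : ℂ) : ordAt (algebraMap ℂ[X] (RatFunc ℂ) (1 - C γ * X)) 0 = 0 := by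
    rw [ordAt_algebraMap, rootMultiplicity_eq_zero (hne γ), Nat.cast_zero]
  have hmul (γ : ℂ) : (RatFunc.X⁻¹ - RatFunc.C γ) * RatFunc.X
      = algebraMap ℂ[X] (RatFunc ℂ) (1 - C γ * X) := by
    rw [map_sub, map_one, map_mul, RatFunc.algebraMap_C, RatFunc.algebraMap_X, sub_mul,
      inv_mul_cancel₀ RatFunc.X_ne_zero]
  have hsubst : invSubst ((RatFunc.X - RatFunc.C β) / (RatFunc.X - RatFunc.C α))
      = algebraMap ℂ[X] (RatFunc ℂ) (1 - C β * X) / algebraMap ℂ[X] (RatFunc ℂ) (1 - C α * X) := by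
    rw [← coe_invSubstHom, map_div₀, coe_invSubstHom, invSubst_X_sub_C, invSubst_X_sub_C,
      ← hmul, ← hmul, mul_div_mul_right _ _ RatFunc.X_ne_zero]
  rw [tameSymbolInf, ordInf_X_sub_C, ordInf_X_sub_C, zpow_neg_one, zpow_neg_one, inv_div_inv,
    hsubst, evalAt_div_of_ordAt_eq_zero (hpoly β) (hpoly α) (hord β) (hord α),
    evalAt_algebraMap, evalAt_algebraMap]
  simp

lemma tameSymbolProd_X_sub_C_of_ne {α β : ℂ} (hαβ : α ≠ β) :
    tameSymbolProd (RatFunc.X - RatFunc.C α) (RatFunc.X - RatFunc.C β) = 1 := by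
  have hf := RatFunc.X_sub_C_ne_zero α
  have hg := RatFunc.X_sub_C_ne_zero β
  have hT : ∀ a ∉ ({α, β} : Finset ℂ),
      tameSymbol (RatFunc.X - RatFunc.C α) (RatFunc.X - RatFunc.C β) a = 1 := fun a ha => by
    rw [Finset.mem_insert, Finset.mem_singleton, not_or] at ha
    exact tameSymbol_eq_one_of_ordAt_eq_zero (by rw [ordAt_X_sub_C, if_neg ha.1])
      (by rw [ordAt_X_sub_C, if_neg ha.2])
  have hTα : tameSymbol (RatFunc.X - RatFunc.C α) (RatFunc.X - RatFunc.C β) α = (α - β)⁻¹ := by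
    rw [tameSymbol_swap hg hf, tameSymbol_of_ordAt_left_eq_zero hg _
      (by rw [ordAt_X_sub_C, if_neg hαβ]), evalAt_X_sub_C, ordAt_X_sub_C, if_pos rfl, zpow_one]
  have hTβ : tameSymbol (RatFunc.X - RatFunc.C α) (RatFunc.X - RatFunc.C β) β = β - α := by
    rw [tameSymbol_of_ordAt_left_eq_zero hf _ (by rw [ordAt_X_sub_C, if_neg hαβ.symm]),
      evalAt_X_sub_C, ordAt_X_sub_C, if_pos rfl, zpow_one]
  rw [tameSymbolProd,
    finprod_eq_prod_of_mulSupport_subset _ fun a ha => by_contra fun h => ha (hT a h),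
    Finset.prod_pair hαβ, hTα, hTβ, tameSymbolInf_X_sub_C_X_sub_C]
  field_simp [sub_ne_zero.mpr hαβ]
  ring

lemma tameSymbolProd_X_sub_C_X_sub_C (α β : ℂ) :
    tameSymbolProd (RatFunc.X - RatFunc.C α) (RatFunc.X - RatFunc.C β) = 1 := by
  obtain rfl | hαβ := eq_or_ne α β
  · exact tameSymbolProd_X_sub_C_self α
  · exact tameSymbolProd_X_sub_C_of_ne hαβ

lemma tameSymbolProd_eq_one_of_generators {g : RatFunc ℂ} (hg : g ≠ 0)
    (hC : ∀ c : ℂ, c ≠ 0 → tameSymbolProd (RatFunc.C c) g = 1)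
    (hX : ∀ α : ℂ, tameSymbolProd (RatFunc.X - RatFunc.C α) g = 1)
    {f : RatFunc ℂ} (hf : f ≠ 0) : tameSymbolProd f g = 1 :=
  RatFunc.induction_on_C_X_sub_C (P := fun f => tameSymbolProd f g = 1) hC hX
    (fun f₁ f₂ hf₁ hf₂ h₁ h₂ => by rw [tameSymbolProd_mul_left hf₁ hf₂ hg, h₁, h₂, one_mul])
    (fun f hf h => by rw [tameSymbolProd_inv_left hf hg, h, inv_one]) hf

lemma tameSymbolProd_C_eq_one {c : ℂ} (hc : c ≠ 0) {g : RatFunc ℂ} (hg : g ≠ 0) :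
    tameSymbolProd (RatFunc.C c) g = 1 := by
  have hC : RatFunc.C c ≠ 0 := (_root_.map_ne_zero _).mpr hc
  rw [tameSymbolProd_swap hg hC, inv_eq_one]
  exact tameSymbolProd_eq_one_of_generators hC (fun d hd => tameSymbolProd_C_C hd hc)
    (fun α => by rw [tameSymbolProd_swap hC (RatFunc.X_sub_C_ne_zero α),
      tameSymbolProd_C_X_sub_C hc α, inv_one]) hg

lemma tameSymbolProd_X_sub_C_eq_one (α : ℂ) {g : RatFunc ℂ} (hg : g ≠ 0) :
    tameSymbolProd (RatFunc.X - RatFunc.C α) g = 1 := by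
  have hX := RatFunc.X_sub_C_ne_zero α
  rw [tameSymbolProd_swap hg hX, inv_eq_one]
  exact tameSymbolProd_eq_one_of_generators hX (fun c hc => tameSymbolProd_C_X_sub_C hc α)
    (fun β => tameSymbolProd_X_sub_C_X_sub_C β α) hg

theorem tameSymbolProd_eq_one {f g : RatFunc ℂ} (hf : f ≠ 0) (hg : g ≠ 0) :
    tameSymbolProd f g = 1 :=
  tameSymbolProd_eq_one_of_generators hg (fun _ hc => tameSymbolProd_C_eq_one hc hg)
    (fun α => tameSymbolProd_X_sub_C_eq_one α hg) hf

/-- **Weil reciprocity on ℙ¹(ℂ).** For nonzero rational functions `f, g ∈ ℂ(z)`, only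
finitely many of the tame symbols `T_a{f,g}` (for `a ∈ ℂ`) differ from `1`, and the
product of the tame symbols over all points of `ℙ¹(ℂ)` — all `a ∈ ℂ` together with the
point at infinity — equals `1`. -/
theorem weil_reciprocity_P1 (f g : RatFunc ℂ) (hf : f ≠ 0) (hg : g ≠ 0) :
    {a : ℂ | tameSymbol f g a ≠ 1}.Finite ∧
    (∏ᶠ a : ℂ, tameSymbol f g a) * tameSymbolInf f g = 1 :=
  ⟨hasFiniteMulSupport_tameSymbol hf hg, tameSymbolProd_eq_one hf hg⟩
end

section
/- Let f and g be nonzero rational functions in ℂ(z) such that ord_∞(f) = ord_∞(g) = 0 and such that no point a ∈ ℂ is simultaneously a zero or pole of f and a zero or pole of g (disjoint divisor supports). Then ∏_{a ∈ ℂ, ord_a(g) ≠ 0} f(a)^{ord_a(g)} = ∏_{b ∈ ℂ, ord_b(f) ≠ 0} g(b)^{ord_b(f)}, where both products are finite and all evaluations f(a), g(b) are well-defined nonzero complex numbers. -/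
open Polynomial

theorem Finset.prod_zpow_eq_zpow_sum₀ {ι G₀ : Type*} [CommGroupWithZero G₀] (s : Finset ι)
    (n : ι → ℤ) {a : G₀} (ha : a ≠ 0) : ∏ i ∈ s, a ^ n i = a ^ ∑ i ∈ s, n i := by
  induction s using Finset.cons_induction with
  | empty => simp
  | cons i s _ ih => rw [Finset.prod_cons, Finset.sum_cons, zpow_add₀ ha, ih]

theorem Finset.prod_prod_sub_zpow_mul {K : Type*} [Field K] (S T : Finset K) (n m : K → ℤ) :
    ∏ a ∈ S, ∏ b ∈ T, (a - b) ^ (n a * m b) =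
      (-1) ^ ((∑ a ∈ S, n a) * ∑ b ∈ T, m b) *
        ∏ b ∈ T, ∏ a ∈ S, (b - a) ^ (m b * n a) := by
  have hflip (a b : K) : (a - b) ^ (n a * m b) = (-1) ^ (n a * m b) * (b - a) ^ (m b * n a) := by
    rw [mul_comm (m b), ← mul_zpow, neg_one_mul, neg_sub]
  have hsign : (-1 : K) ≠ 0 := neg_ne_zero.2 one_ne_zero
  simp_rw [hflip, Finset.prod_mul_distrib, Finset.prod_zpow_eq_zpow_sum₀ _ _ hsign,
    Finset.sum_mul_sum]
  rw [Finset.prod_comm]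

namespace Polynomial

variable {K : Type*} [Field K] [IsAlgClosed K] {p : K[X]} {s : Finset K}

theorem sum_rootMultiplicity_eq_natDegree (hs : ∀ b ∈ p.roots, b ∈ s) :
    ∑ b ∈ s, p.rootMultiplicity b = p.natDegree := by
  classical
  rw [← IsAlgClosed.card_roots_eq_natDegree, ← Multiset.sum_count_eq_card hs]
  simp only [count_roots]

theorem eval_eq_leadingCoeff_mul_prod (hs : ∀ b ∈ p.roots, b ∈ s) (x : K) :
    p.eval x = p.leadingCoeff * ∏ b ∈ s, (x - b) ^ p.rootMultiplicity b := by
  classical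
  conv_lhs =>
    rw [← C_leadingCoeff_mul_prod_multiset_X_sub_C (IsAlgClosed.card_roots_eq_natDegree (p := p))]
  rw [eval_mul, eval_C, eval_multiset_prod, Multiset.map_map, Finset.prod_multiset_map_count]
  simp only [Function.comp_apply, eval_sub, eval_X, eval_C, count_roots]
  congr 1
  refine Finset.prod_subset (fun b hb => hs b (Multiset.mem_toFinset.1 hb)) fun b _ hb => ?_
  rw [← count_roots, Multiset.count_eq_zero_of_notMem (by simpa using hb), pow_zero]

end Polynomial

noncomputable def divisorSupport (f : RatFunc ℂ) : Finset ℂ :=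
  f.num.roots.toFinset ∪ f.denom.roots.toFinset

theorem mem_divisorSupport {f : RatFunc ℂ} {a : ℂ} :
    a ∈ divisorSupport f ↔ a ∈ f.num.roots ∨ a ∈ f.denom.roots := by
  simp [divisorSupport]

theorem eval_num_eq_zero_or_eval_denom_eq_zero {f : RatFunc ℂ} {a : ℂ}
    (ha : a ∈ divisorSupport f) : f.num.eval a = 0 ∨ f.denom.eval a = 0 := by
  rw [mem_divisorSupport, mem_roots', mem_roots'] at ha
  exact ha.imp And.right And.right

theorem ordAt_ne_zero_iff {f : RatFunc ℂ} {a : ℂ} :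
    ordAt f a ≠ 0 ↔ a ∈ divisorSupport f := by
  have hmult : ∀ p : ℂ[X], a ∈ p.roots ↔ p.rootMultiplicity a ≠ 0 := fun p => by
    rw [mem_roots', ← rootMultiplicity_pos', Nat.pos_iff_ne_zero]
  have hcop : f.num.rootMultiplicity a = 0 ∨ f.denom.rootMultiplicity a = 0 :=
    (aeval_ne_zero_of_isCoprime (RatFunc.isCoprime_num_denom f) a).imp
      rootMultiplicity_eq_zero rootMultiplicity_eq_zero
  rw [mem_divisorSupport, hmult, hmult, ordAt]
  omega

theorem sum_ordAt_divisorSupport (f : RatFunc ℂ) :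
    ∑ a ∈ divisorSupport f, ordAt f a = -ordInf f := by
  have hnum : ∑ a ∈ divisorSupport f, f.num.rootMultiplicity a = f.num.natDegree :=
    sum_rootMultiplicity_eq_natDegree fun b hb => mem_divisorSupport.2 (Or.inl hb)
  have hdenom : ∑ a ∈ divisorSupport f, f.denom.rootMultiplicity a = f.denom.natDegree :=
    sum_rootMultiplicity_eq_natDegree fun b hb => mem_divisorSupport.2 (Or.inr hb)
  simp only [ordAt, ordInf, Finset.sum_sub_distrib]
  push_cast [← hnum, ← hdenom]
  ring

theorem evalAt_eq_mul_prod (f : RatFunc ℂ) {a : ℂ} (ha : a ∉ divisorSupport f) :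
    evalAt f a = f.num.leadingCoeff / f.denom.leadingCoeff *
      ∏ b ∈ divisorSupport f, (a - b) ^ ordAt f b := by
  have hsub : ∀ b ∈ divisorSupport f, a - b ≠ 0 := fun b hb =>
    sub_ne_zero.2 (ne_of_mem_of_not_mem hb ha).symm
  rw [evalAt, RatFunc.eval, eval₂_id, eval₂_id,
    eval_eq_leadingCoeff_mul_prod fun b hb => mem_divisorSupport.2 (Or.inl hb),
    eval_eq_leadingCoeff_mul_prod fun b hb => mem_divisorSupport.2 (Or.inr hb),
    mul_div_mul_comm, ← Finset.prod_div_distrib]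
  refine congrArg _ (Finset.prod_congr rfl fun b hb => ?_)
  rw [ordAt, zpow_sub₀ (hsub b hb), zpow_natCast, zpow_natCast]

theorem prod_evalAt_zpow {f : RatFunc ℂ} (hf : f ≠ 0) {S : Finset ℂ} (n : ℂ → ℤ)
    (hn : ∑ a ∈ S, n a = 0) (hS : Disjoint S (divisorSupport f)) :
    ∏ a ∈ S, evalAt f a ^ n a =
      ∏ a ∈ S, ∏ b ∈ divisorSupport f, (a - b) ^ (n a * ordAt f b) := by
  have hc : f.num.leadingCoeff / f.denom.leadingCoeff ≠ 0 :=
    div_ne_zero (leadingCoeff_ne_zero.2 (RatFunc.num_ne_zero hf))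
      (leadingCoeff_ne_zero.2 (RatFunc.denom_ne_zero f))
  calc ∏ a ∈ S, evalAt f a ^ n a
      = (∏ a ∈ S, (f.num.leadingCoeff / f.denom.leadingCoeff) ^ n a) *
          ∏ a ∈ S, (∏ b ∈ divisorSupport f, (a - b) ^ ordAt f b) ^ n a := by
        rw [← Finset.prod_mul_distrib]
        refine Finset.prod_congr rfl fun a ha => ?_
        rw [evalAt_eq_mul_prod f (Finset.disjoint_left.1 hS ha), mul_zpow]
    _ = _ := by
        rw [Finset.prod_zpow_eq_zpow_sum₀ _ _ hc, hn, zpow_zero, one_mul]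
        refine Finset.prod_congr rfl fun a _ => ?_
        rw [← Finset.prod_zpow]
        exact Finset.prod_congr rfl fun b _ => by rw [← zpow_mul, mul_comm]

/-- **Weil reciprocity on ℙ¹ with disjoint divisor supports.** If `f, g ∈ ℂ(z)` are
nonzero with `ord_∞(f) = ord_∞(g) = 0` and no `a ∈ ℂ` is simultaneously a zero or pole
of `f` and a zero or pole of `g`, then
`∏_{a, ord_a(g) ≠ 0} f(a)^{ord_a(g)} = ∏_{b, ord_b(f) ≠ 0} g(b)^{ord_b(f)}`;
both products are finite and all the evaluations are well-defined nonzero complex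
numbers. -/
theorem weil_reciprocity_disjoint (f g : RatFunc ℂ) (hf : f ≠ 0) (hg : g ≠ 0)
    (hinf_f : ordInf f = 0) (hinf_g : ordInf g = 0)
    (hdisj : ∀ a : ℂ, ¬((f.num.eval a = 0 ∨ f.denom.eval a = 0) ∧
      (g.num.eval a = 0 ∨ g.denom.eval a = 0))) :
    {a : ℂ | ordAt g a ≠ 0}.Finite ∧ {b : ℂ | ordAt f b ≠ 0}.Finite ∧
    (∀ a : ℂ, ordAt g a ≠ 0 → f.num.eval a ≠ 0 ∧ f.denom.eval a ≠ 0) ∧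
    (∀ b : ℂ, ordAt f b ≠ 0 → g.num.eval b ≠ 0 ∧ g.denom.eval b ≠ 0) ∧
    (∏ᶠ (a : ℂ) (_ : ordAt g a ≠ 0), evalAt f a ^ ordAt g a) =
      ∏ᶠ (b : ℂ) (_ : ordAt f b ≠ 0), evalAt g b ^ ordAt f b := by
  have hfin : ∀ h : RatFunc ℂ, {a | ordAt h a ≠ 0}.Finite := fun h =>
    (divisorSupport h).finite_toSet.subset fun a => ordAt_ne_zero_iff.1
  have hzero := @eval_num_eq_zero_or_eval_denom_eq_zero
  have hsupp : Disjoint (divisorSupport g) (divisorSupport f) :=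
    Finset.disjoint_left.2 fun a hag haf => hdisj a ⟨hzero haf, hzero hag⟩
  have hdeg_f : ∑ b ∈ divisorSupport f, ordAt f b = 0 := by
    rw [sum_ordAt_divisorSupport, hinf_f, neg_zero]
  have hdeg_g : ∑ a ∈ divisorSupport g, ordAt g a = 0 := by
    rw [sum_ordAt_divisorSupport, hinf_g, neg_zero]
  refine ⟨hfin g, hfin f, fun a ha => ?_, fun b hb => ?_, ?_⟩
  · simpa [not_or] using fun h => hdisj a ⟨h, hzero (ordAt_ne_zero_iff.1 ha)⟩
  · simpa [not_or] using fun h => hdisj b ⟨hzero (ordAt_ne_zero_iff.1 hb), h⟩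
  rw [finprod_cond_eq_prod_of_cond_iff _ fun _ => ordAt_ne_zero_iff,
    finprod_cond_eq_prod_of_cond_iff _ fun _ => ordAt_ne_zero_iff,
    prod_evalAt_zpow hf _ hdeg_g hsupp, prod_evalAt_zpow hg _ hdeg_f hsupp.symm,
    Finset.prod_prod_sub_zpow_mul, hdeg_g, zero_mul, zpow_zero, one_mul]
end

section
/- Let f and g be nonzero rational functions in ℂ(z) such that ord_∞(f) = ord_∞(g) = 0 and such that no point a ∈ ℂ is simultaneously a zero or pole of f and a zero or pole of g. Then ∑_{a ∈ ℂ, ord_a(g) ≠ 0} ord_a(g) · log|f(a)| = ∑_{b ∈ ℂ, ord_b(f) ≠ 0} ord_b(f) · log|g(b)|, where both sums are finite and all evaluations f(a), g(b) are well-defined nonzero complex numbers (so the logarithms of their absolute values are defined). -/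
open Polynomial

/-!
Factoring numerator and denominator over `ℂ` gives, away from the zeros and poles of `f`,
`log |f(a)| = c_f + ∑_b ord_b(f) log |a - b|` with `c_f` the log of the ratio of leading
coefficients. Pairing with the divisor of `g`, the constant contributes
`c_f · deg (div g) = -c_f · ord_∞(g) = 0`, and what remains,
`∑_{a,b} ord_a(g) ord_b(f) log |a - b|`, is symmetric in `f` and `g`.
-/

theorem Polynomial.Splits.log_norm_eval {K : Type*} [NormedField K] {p : K[X]} (hp : p.Splits)
    {a : K} (ha : p.eval a ≠ 0) :
    Real.log ‖p.eval a‖ =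
      Real.log ‖p.leadingCoeff‖ + (p.roots.map fun b => Real.log ‖a - b‖).sum := by
  rw [hp.eval_eq_prod_roots] at ha ⊢
  obtain ⟨hlc, hprod⟩ := mul_ne_zero_iff.mp ha
  have hnorm : ‖(p.roots.map (a - ·)).prod‖ = (p.roots.map fun b => ‖a - b‖).prod := by
    simpa [Multiset.map_map] using map_multiset_prod (normHom : K →*₀ ℝ) (p.roots.map (a - ·))
  have hfactors : ∀ x ∈ p.roots.map fun b => ‖a - b‖, x ≠ 0 := by
    rintro _ hx
    obtain ⟨b, hb, rfl⟩ := Multiset.mem_map.mp hx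
    exact norm_ne_zero_iff.mpr fun h =>
      hprod (Multiset.prod_eq_zero (Multiset.mem_map.mpr ⟨b, hb, h⟩))
  rw [norm_mul, Real.log_mul (norm_ne_zero_iff.mpr hlc) (norm_ne_zero_iff.mpr hprod), hnorm,
    Real.log_multiset_prod hfactors, Multiset.map_map]
  rfl

theorem Multiset.sum_map_eq_sum_count_mul {α : Type*} [DecidableEq α] {s : Multiset α}
    {t : Finset α} (hst : s.toFinset ⊆ t) (φ : α → ℝ) :
    (s.map φ).sum = ∑ a ∈ t, (s.count a : ℝ) * φ a := by
  rw [Finset.sum_multiset_map_count, Finset.sum_subset hst fun a _ ha => by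
    rw [Multiset.count_eq_zero.mpr (by simpa using ha), zero_smul]]
  simp only [nsmul_eq_mul]

/-- `∑ₐ ord_a(f) φ(a)`, the pairing of `φ` with the divisor of `f`. -/
noncomputable def divSum (f : RatFunc ℂ) (φ : ℂ → ℝ) : ℝ :=
  (f.num.roots.map φ).sum - (f.denom.roots.map φ).sum

theorem ordAt_eq_count_sub_count (f : RatFunc ℂ) (a : ℂ) :
    ordAt f a = f.num.roots.count a - f.denom.roots.count a := by
  simp only [ordAt, count_roots]

theorem mem_roots_of_ordAt_ne_zero {f : RatFunc ℂ} {a : ℂ} (h : ordAt f a ≠ 0) :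
    a ∈ f.num.roots ∨ a ∈ f.denom.roots := by
  contrapose! h
  rw [ordAt_eq_count_sub_count, Multiset.count_eq_zero.mpr h.1, Multiset.count_eq_zero.mpr h.2,
    sub_self]

theorem support_ordAt_subset (f : RatFunc ℂ) :
    Function.support (ordAt f) ⊆ ↑(f.num.roots.toFinset ∪ f.denom.roots.toFinset) :=
  fun _ ha => by simpa using mem_roots_of_ordAt_ne_zero ha

theorem eval_ne_zero_of_mem_roots {f g : RatFunc ℂ}
    (hdisj : ∀ a : ℂ, ¬((f.num.eval a = 0 ∨ f.denom.eval a = 0) ∧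
      (g.num.eval a = 0 ∨ g.denom.eval a = 0)))
    {a : ℂ} (ha : a ∈ g.num.roots ∨ a ∈ g.denom.roots) :
    f.num.eval a ≠ 0 ∧ f.denom.eval a ≠ 0 := by
  have hroot := ha.imp isRoot_of_mem_roots isRoot_of_mem_roots
  have := hdisj a
  tauto

theorem finsum_ordAt_mul (f : RatFunc ℂ) (φ : ℂ → ℝ) :
    ∑ᶠ (a : ℂ) (_ : ordAt f a ≠ 0), (ordAt f a : ℝ) * φ a = divSum f φ := by
  classical
  rw [finsum_cond_eq_sum_of_cond_iff (p := (ordAt f · ≠ 0)) _ fun {a} ha =>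
      ⟨fun h => support_ordAt_subset f h, fun _ => by simpa using left_ne_zero_of_mul ha⟩,
    divSum, Multiset.sum_map_eq_sum_count_mul Finset.subset_union_left,
    Multiset.sum_map_eq_sum_count_mul Finset.subset_union_right, ← Finset.sum_sub_distrib]
  refine Finset.sum_congr rfl fun a _ => ?_
  rw [ordAt_eq_count_sub_count]
  push_cast
  ring

theorem divSum_congr {f : RatFunc ℂ} {φ ψ : ℂ → ℝ}
    (h : ∀ a, a ∈ f.num.roots ∨ a ∈ f.denom.roots → φ a = ψ a) :
    divSum f φ = divSum f ψ := by
  rw [divSum, divSum, Multiset.map_congr rfl fun a ha => h a (Or.inl ha),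
    Multiset.map_congr rfl fun a ha => h a (Or.inr ha)]

theorem divSum_const_add (f : RatFunc ℂ) (c : ℝ) (φ : ℂ → ℝ) :
    divSum f (fun a => c + φ a) = -ordInf f * c + divSum f φ := by
  have hcard (p : ℂ[X]) : (p.roots.card : ℝ) = p.natDegree := by
    rw [(IsAlgClosed.splits p).natDegree_eq_card_roots]
  simp only [divSum, ordInf, Multiset.sum_map_add, Multiset.map_const', Multiset.sum_replicate,
    nsmul_eq_mul, hcard]
  push_cast
  ring

theorem divSum_comm (f g : RatFunc ℂ) (ψ : ℂ → ℂ → ℝ) :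
    divSum f (fun b => divSum g (ψ b)) = divSum g (fun a => divSum f (ψ · a)) := by
  simp only [divSum, Multiset.sum_map_sub, Multiset.sum_map_sum_map (m := f.num.roots),
    Multiset.sum_map_sum_map (m := f.denom.roots)]
  ring

theorem log_norm_evalAt (f : RatFunc ℂ) {a : ℂ} (hnum : f.num.eval a ≠ 0)
    (hdenom : f.denom.eval a ≠ 0) :
    Real.log ‖evalAt f a‖ = Real.log ‖f.num.leadingCoeff‖ - Real.log ‖f.denom.leadingCoeff‖ +
      divSum f (fun b => Real.log ‖a - b‖) := by
  rw [evalAt, RatFunc.eval, eval₂_id, eval₂_id, norm_div,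
    Real.log_div (norm_ne_zero_iff.mpr hnum) (norm_ne_zero_iff.mpr hdenom),
    (IsAlgClosed.splits _).log_norm_eval hnum, (IsAlgClosed.splits _).log_norm_eval hdenom, divSum]
  ring

theorem log_weil_reciprocity_disjoint_general (f g : RatFunc ℂ)
    (hinf_f : ordInf f = 0) (hinf_g : ordInf g = 0)
    (hdisj : ∀ a : ℂ, ¬((f.num.eval a = 0 ∨ f.denom.eval a = 0) ∧
      (g.num.eval a = 0 ∨ g.denom.eval a = 0))) :
    {a : ℂ | ordAt g a ≠ 0}.Finite ∧ {b : ℂ | ordAt f b ≠ 0}.Finite ∧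
    (∀ a : ℂ, ordAt g a ≠ 0 → f.num.eval a ≠ 0 ∧ f.denom.eval a ≠ 0) ∧
    (∀ b : ℂ, ordAt f b ≠ 0 → g.num.eval b ≠ 0 ∧ g.denom.eval b ≠ 0) ∧
    (∑ᶠ (a : ℂ) (_ : ordAt g a ≠ 0),
        (ordAt g a : ℝ) * Real.log ‖evalAt f a‖) =
      ∑ᶠ (b : ℂ) (_ : ordAt f b ≠ 0),
        (ordAt f b : ℝ) * Real.log ‖evalAt g b‖ := by
  have hfg {a : ℂ} := eval_ne_zero_of_mem_roots (a := a) hdisj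
  have hgf {b : ℂ} := eval_ne_zero_of_mem_roots (a := b) fun a h => hdisj a h.symm
  refine ⟨(Finset.finite_toSet _).subset (support_ordAt_subset g),
    (Finset.finite_toSet _).subset (support_ordAt_subset f),
    fun a ha => hfg (mem_roots_of_ordAt_ne_zero ha),
    fun b hb => hgf (mem_roots_of_ordAt_ne_zero hb), ?_⟩
  rw [finsum_ordAt_mul, finsum_ordAt_mul,
    divSum_congr fun a ha => log_norm_evalAt f (hfg ha).1 (hfg ha).2,
    divSum_congr fun b hb => log_norm_evalAt g (hgf hb).1 (hgf hb).2,
    divSum_const_add, divSum_const_add, hinf_f, hinf_g, divSum_comm]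
  simp only [norm_sub_rev, Int.cast_zero, neg_zero, zero_mul, zero_add]

/-- **Logarithmic Weil reciprocity on ℙ¹.** If `f, g ∈ ℂ(z)` are nonzero with
`ord_∞(f) = ord_∞(g) = 0` and no `a ∈ ℂ` is simultaneously a zero or pole of `f` and a
zero or pole of `g`, then
`∑_{a, ord_a(g) ≠ 0} ord_a(g)·log|f(a)| = ∑_{b, ord_b(f) ≠ 0} ord_b(f)·log|g(b)|`;
both sums are finite and all the evaluations are well-defined nonzero complex numbers. -/
theorem log_weil_reciprocity_disjoint (f g : RatFunc ℂ) (hf : f ≠ 0) (hg : g ≠ 0)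
    (hinf_f : ordInf f = 0) (hinf_g : ordInf g = 0)
    (hdisj : ∀ a : ℂ, ¬((f.num.eval a = 0 ∨ f.denom.eval a = 0) ∧
      (g.num.eval a = 0 ∨ g.denom.eval a = 0))) :
    {a : ℂ | ordAt g a ≠ 0}.Finite ∧ {b : ℂ | ordAt f b ≠ 0}.Finite ∧
    (∀ a : ℂ, ordAt g a ≠ 0 → f.num.eval a ≠ 0 ∧ f.denom.eval a ≠ 0) ∧
    (∀ b : ℂ, ordAt f b ≠ 0 → g.num.eval b ≠ 0 ∧ g.denom.eval b ≠ 0) ∧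
    (∑ᶠ (a : ℂ) (_ : ordAt g a ≠ 0),
        (ordAt g a : ℝ) * Real.log ‖evalAt f a‖) =
      ∑ᶠ (b : ℂ) (_ : ordAt f b ≠ 0),
        (ordAt f b : ℝ) * Real.log ‖evalAt g b‖ :=
  log_weil_reciprocity_disjoint_general f g hinf_f hinf_g hdisj
end

section
/- Let N ≥ 1 and let p₁, …, p_N, q₁, …, q_N be complex numbers such that the sets {p₁, …, p_N} and {q₁, …, q_N} are disjoint. Then there exists a ∈ ℂ, distinct from all the p_i and all the q_i, such that ∑_{i=1}^N log|p_i − a| ≠ ∑_{i=1}^N log|q_i − a|. -/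
/-!
If the two log-sums agreed at every admissible `a`, then `a ↦ ‖∏ (pᵢ - a)‖` and
`a ↦ ‖∏ (qᵢ - a)‖` (the exponentials of the log-sums) would agree off a finite set, hence
everywhere by continuity. At `a = q₁` the second vanishes, so some `pᵢ = q₁`,
contradicting disjointness.
-/

open Topology

theorem Continuous.ext_on_compl_finite {X Y : Type*} [TopologicalSpace X] [T1Space X]
    [∀ x : X, (𝓝[≠] x).NeBot] [TopologicalSpace Y] [T2Space Y] {f g : X → Y}
    (hf : Continuous f) (hg : Continuous g) {s : Set X} (hs : s.Finite)
    (h : Set.EqOn f g sᶜ) : f = g :=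
  hf.ext_on (Set.compl_eq_univ_sdiff s ▸ dense_univ.sdiff_finite hs) hg h

theorem norm_prod_eq_exp_sum_log_norm {ι 𝕜 : Type*} [NormedField 𝕜] {s : Finset ι}
    {f : ι → 𝕜} (hf : ∀ i ∈ s, f i ≠ 0) :
    ‖∏ i ∈ s, f i‖ = Real.exp (∑ i ∈ s, Real.log ‖f i‖) := by
  rw [Real.exp_sum, norm_prod]
  exact Finset.prod_congr rfl fun i hi => (Real.exp_log (norm_pos_iff.2 (hf i hi))).symm

/-- Given `N ≥ 1` and complex numbers `p₁, …, p_N, q₁, …, q_N` with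
`{p₁, …, p_N} ∩ {q₁, …, q_N} = ∅`, there exists `a ∈ ℂ`, distinct from all the `pᵢ` and
all the `qᵢ`, such that `∑ᵢ log|pᵢ − a| ≠ ∑ᵢ log|qᵢ − a|`. -/
theorem exists_point_separating_log_sums (N : ℕ) (hN : 1 ≤ N) (p q : Fin N → ℂ)
    (hdisj : Disjoint (Set.range p) (Set.range q)) :
    ∃ a : ℂ, (∀ i, p i ≠ a) ∧ (∀ i, q i ≠ a) ∧
      (∑ i, Real.log ‖p i - a‖) ≠
        ∑ i, Real.log ‖q i - a‖ := by
  by_contra! h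
  have hnorm : (fun a => ‖∏ i, (p i - a)‖) = fun a => ‖∏ i, (q i - a)‖ := by
    refine Continuous.ext_on_compl_finite (by fun_prop) (by fun_prop)
      ((Set.finite_range p).union (Set.finite_range q)) fun a ha => ?_
    simp only [Set.mem_compl_iff, Set.mem_union, Set.mem_range, not_or, not_exists] at ha
    rw [norm_prod_eq_exp_sum_log_norm fun i _ => sub_ne_zero.2 (ha.1 i),
      norm_prod_eq_exp_sum_log_norm fun i _ => sub_ne_zero.2 (ha.2 i), h a ha.1 ha.2]
  let i₀ : Fin N := ⟨0, hN⟩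
  have hp_vanish : ‖∏ i, (p i - q i₀)‖ = 0 := by
    rw [congrFun hnorm, Finset.prod_eq_zero (Finset.mem_univ i₀) (sub_self _), norm_zero]
  obtain ⟨i, -, hi⟩ := Finset.prod_eq_zero_iff.1 (norm_eq_zero.1 hp_vanish)
  exact hdisj.ne_of_mem ⟨i, rfl⟩ ⟨i₀, rfl⟩ (sub_eq_zero.1 hi)
end
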